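/- arXiv:1711.02437 — 2 statements merged into one kernel-verified Lean document; each statement's English description precedes it below -/
import Mathlib

section
/- Let $v_\ell, c_\ell > 0$ for $\ell = 0, \dots, L$ and $p > 0$. Among positive reals $N_0, \dots, N_L$ subject to the variance constraint $\sum_{\ell=0}^L N_\ell^{-p} v_\ell \le V$, the total cost $\sum_{\ell=0}^L N_\ell c_\ell$ is minimized by $N_\ell = (\lambda p\, v_\ell / c_\ell)^{1/(p+1)}$ for a suitable Lagrange multiplier $\lambda > 0$, and the minimal cost equals $V^{-1/p} \left( \sum_{\ell=0}^L (c_\ell^p v_\ell)^{1/(p+1)} \right)^{(p+1)/p}$. -/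
/-!
For a multiplier `λ > 0`, each term `N c + λ N⁻ᵖ v` of the Lagrangian is minimised at
`N = (λ p v / c)^(1/(p+1))`: writing a competitor as `t N`, this is the weighted AM-GM inequality
`p t + t⁻ᵖ ≥ p + 1`. Summing over the levels, every allocation meeting the variance bound
`∑ N⁻ᵖ v` of the minimiser costs at least as much. Choosing `λ` to make that bound equal to `V`
gives the optimum, and the first-order condition `N c = p λ N⁻ᵖ v` shows its cost is `p λ V`.
-/

open Finset

theorem add_one_le_mul_add_rpow_neg {p t : ℝ} (hp : 0 < p) (ht : 0 < t) :
    p + 1 ≤ p * t + t ^ (-p) := by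
  have hp1 : 0 < p + 1 := by linarith
  have hgm : t ^ (p / (p + 1)) * (t ^ (-p)) ^ (1 / (p + 1)) = 1 := by
    rw [← Real.rpow_mul ht.le, ← Real.rpow_add ht]
    convert Real.rpow_zero t using 2
    field_simp
    ring
  have amgm := Real.geom_mean_le_arith_mean2_weighted (by positivity) (by positivity) ht.le
    (Real.rpow_nonneg ht.le (-p)) (show p / (p + 1) + 1 / (p + 1) = 1 by field_simp)
  rw [hgm] at amgm
  have := mul_le_mul_of_nonneg_left amgm hp1.le
  field_simp at this
  linarith

noncomputable def optimalSampleSize (lam p v c : ℝ) : ℝ := (lam * p * v / c) ^ (1 / (p + 1))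

section optimalSampleSize

variable {lam p v c : ℝ}

theorem optimalSampleSize_pos (hlam : 0 < lam) (hp : 0 < p) (hv : 0 < v) (hc : 0 < c) :
    0 < optimalSampleSize lam p v c := by
  unfold optimalSampleSize; positivity

theorem optimalSampleSize_rpow_add_one (hlam : 0 < lam) (hp : 0 < p) (hv : 0 < v) (hc : 0 < c) :
    optimalSampleSize lam p v c ^ (p + 1) = lam * p * v / c := by
  rw [optimalSampleSize, ← Real.rpow_mul (by positivity), one_div_mul_cancel (by linarith),
    Real.rpow_one]

-- The first-order condition for minimising `N c + λ N⁻ᵖ v` in `N`.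
theorem optimalSampleSize_mul (hlam : 0 < lam) (hp : 0 < p) (hv : 0 < v) (hc : 0 < c) :
    optimalSampleSize lam p v c * c = p * (lam * (optimalSampleSize lam p v c ^ (-p) * v)) := by
  set N := optimalSampleSize lam p v c
  have hN := optimalSampleSize_pos hlam hp hv hc
  have hsplit : N ^ (-p) * N ^ (p + 1) = N := by
    rw [← Real.rpow_add hN, neg_add_cancel_left, Real.rpow_one]
  rw [optimalSampleSize_rpow_add_one hlam hp hv hc] at hsplit
  calc N * c = N ^ (-p) * (lam * p * v / c) * c := by rw [hsplit]
    _ = p * (lam * (N ^ (-p) * v)) := by field_simp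

theorem optimalSampleSize_rpow_neg_mul (hlam : 0 < lam) (hp : 0 < p) (hv : 0 < v) (hc : 0 < c) :
    optimalSampleSize lam p v c ^ (-p) * v
      = (lam * p) ^ (-p / (p + 1)) * (c ^ p * v) ^ (1 / (p + 1)) := by
  have hp1 : 0 < p + 1 := by linarith
  rw [optimalSampleSize, ← Real.rpow_mul (by positivity), mul_div_assoc,
    Real.mul_rpow (by positivity) (by positivity), Real.mul_rpow (by positivity) hv.le,
    Real.div_rpow hv.le hc.le, ← Real.rpow_mul hc.le]
  have hv' : v ^ (-p / (p + 1)) * v = v ^ (1 / (p + 1)) := by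
    rw [← Real.rpow_add_one hv.ne']
    congr 1
    field_simp
    ring
  have hc' : (c ^ (-p / (p + 1)))⁻¹ = c ^ (p / (p + 1)) := by
    rw [← Real.rpow_neg hc.le, neg_div, neg_neg]
  rw [show 1 / (p + 1) * -p = -p / (p + 1) by ring, show p * (1 / (p + 1)) = p / (p + 1) by ring,
    ← hv', ← hc']
  ring

theorem optimalSampleSize_lagrangian_le (hlam : 0 < lam) (hp : 0 < p) (hv : 0 < v) (hc : 0 < c)
    {x : ℝ} (hx : 0 < x) :
    optimalSampleSize lam p v c * c + lam * (optimalSampleSize lam p v c ^ (-p) * v)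
      ≤ x * c + lam * (x ^ (-p) * v) := by
  set N := optimalSampleSize lam p v c
  set a := lam * (N ^ (-p) * v)
  have hN := optimalSampleSize_pos hlam hp hv hc
  have ha : 0 < a := by positivity
  have hfoc : N * c = p * a := optimalSampleSize_mul hlam hp hv hc
  set t := x / N
  have hx : x = t * N := (div_mul_cancel₀ x hN.ne').symm
  have ht : 0 < t := by positivity
  have hcost : x * c = p * t * a := by rw [hx, mul_assoc, hfoc]; ring
  have hvar : lam * (x ^ (-p) * v) = t ^ (-p) * a := by
    rw [hx, Real.mul_rpow ht.le hN.le]; ring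
  rw [hfoc, hcost, hvar]
  nlinarith [add_one_le_mul_add_rpow_neg hp ht]

end optimalSampleSize

theorem sum_optimalSampleSize_mul_le {ι : Type*} {s : Finset ι} {lam p : ℝ} {v c M : ι → ℝ}
    (hlam : 0 < lam) (hp : 0 < p) (hv : ∀ i ∈ s, 0 < v i) (hc : ∀ i ∈ s, 0 < c i)
    (hM : ∀ i ∈ s, 0 < M i)
    (hMv : ∑ i ∈ s, M i ^ (-p) * v i ≤ ∑ i ∈ s, optimalSampleSize lam p (v i) (c i) ^ (-p) * v i) :
    ∑ i ∈ s, optimalSampleSize lam p (v i) (c i) * c i ≤ ∑ i ∈ s, M i * c i := by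
  have hlag := sum_le_sum fun i hi =>
    optimalSampleSize_lagrangian_le hlam hp (hv i hi) (hc i hi) (hM i hi)
  simp only [sum_add_distrib, ← mul_sum] at hlag
  nlinarith [mul_le_mul_of_nonneg_left hMv hlam.le]

theorem stmt_6 (L : ℕ) (p V : ℝ) (hp : 0 < p) (hV : 0 < V)
    (v c : ℕ → ℝ) (hv : ∀ ℓ ≤ L, 0 < v ℓ) (hc : ∀ ℓ ≤ L, 0 < c ℓ) :
    ∃ lam : ℝ, 0 < lam ∧
      let N : ℕ → ℝ := fun ℓ => (lam * p * v ℓ / c ℓ) ^ (1 / (p + 1))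
      (∑ ℓ ∈ Finset.range (L + 1), (N ℓ) ^ (-p) * v ℓ ≤ V) ∧
      (∑ ℓ ∈ Finset.range (L + 1), N ℓ * c ℓ =
        V ^ (-1 / p) *
          (∑ ℓ ∈ Finset.range (L + 1), (c ℓ ^ p * v ℓ) ^ (1 / (p + 1))) ^ ((p + 1) / p)) ∧
      ∀ M : ℕ → ℝ, (∀ ℓ ≤ L, 0 < M ℓ) →
        (∑ ℓ ∈ Finset.range (L + 1), (M ℓ) ^ (-p) * v ℓ ≤ V) →
        ∑ ℓ ∈ Finset.range (L + 1), N ℓ * c ℓ ≤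
          ∑ ℓ ∈ Finset.range (L + 1), M ℓ * c ℓ := by
  simp only [← mem_range_succ_iff] at hv hc ⊢
  set S := ∑ ℓ ∈ range (L + 1), (c ℓ ^ p * v ℓ) ^ (1 / (p + 1))
  have hS : 0 < S := sum_pos (fun ℓ hℓ => by have := hv ℓ hℓ; have := hc ℓ hℓ; positivity)
    nonempty_range_add_one
  -- `λ` is chosen so that the variance constraint is active at the optimum.
  set lam := (S / V) ^ ((p + 1) / p) / p
  have hlam : 0 < lam := by positivity
  have hlamp : lam * p = (S / V) ^ ((p + 1) / p) := div_mul_cancel₀ _ hp.ne'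
  have hvar : ∑ ℓ ∈ range (L + 1), optimalSampleSize lam p (v ℓ) (c ℓ) ^ (-p) * v ℓ = V := by
    rw [sum_congr rfl fun ℓ hℓ => optimalSampleSize_rpow_neg_mul hlam hp (hv ℓ hℓ) (hc ℓ hℓ),
      ← mul_sum, hlamp, ← Real.rpow_mul (by positivity),
      show (p + 1) / p * (-p / (p + 1)) = -1 by field_simp, Real.rpow_neg_one, inv_div,
      div_mul_cancel₀ _ hS.ne']
  have hcost : ∑ ℓ ∈ range (L + 1), optimalSampleSize lam p (v ℓ) (c ℓ) * c ℓ
      = V ^ (-1 / p) * S ^ ((p + 1) / p) := by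
    rw [sum_congr rfl fun ℓ hℓ => optimalSampleSize_mul hlam hp (hv ℓ hℓ) (hc ℓ hℓ),
      ← mul_sum, ← mul_sum, hvar, ← mul_assoc, mul_comm p, hlamp, Real.div_rpow hS.le hV.le,
      show -1 / p = 1 - (p + 1) / p by field_simp; ring, Real.rpow_sub hV, Real.rpow_one]
    ring
  exact ⟨lam, hlam, hvar.le, hcost, fun M hM hMV =>
    sum_optimalSampleSize_mul_le hlam hp hv hc hM (hvar ▸ hMV)⟩
end

section
/- Let $p > 0$, $V > 0$, and $v_\ell, c_\ell > 0$ for $\ell = 0, \dots, L$. Then for all positive reals $N_0, \dots, N_L$ with $\sum_{\ell=0}^L N_\ell^{-p} v_\ell \le V$, the cost satisfies the lower bound $\sum_{\ell=0}^L N_\ell c_\ell \ge V^{-1/p} \left( \sum_{\ell=0}^L (c_\ell^p v_\ell)^{1/(p+1)} \right)^{(p+1)/p}$. -/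
open Finset

namespace Real

variable {ι : Type*} {s : Finset ι} {p : ℝ} {N a b : ι → ℝ}

lemma holderTriple_inv_one_one_div_add_one (hp : 0 < p) : HolderTriple p⁻¹ 1 (1 / (p + 1)) where
  inv_add_inv_eq_inv := by simp
  left_pos := inv_pos.2 hp
  right_pos := one_pos

/-- Hölder's inequality applied to
`(a^p b)^(1/(p+1)) = ((N a)^p)^(1/(p+1)) * (N^(-p) b)^(1/(p+1))`. -/
lemma sum_rpow_mul_rpow_le (hp : 0 < p) (hN : ∀ i ∈ s, 0 < N i) (ha : ∀ i ∈ s, 0 ≤ a i)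
    (hb : ∀ i ∈ s, 0 ≤ b i) :
    ∑ i ∈ s, (a i ^ p * b i) ^ (1 / (p + 1)) ≤
      (∑ i ∈ s, N i * a i) ^ (p / (p + 1)) * (∑ i ∈ s, N i ^ (-p) * b i) ^ (1 / (p + 1)) := by
  have hr : 1 / (p + 1) / p⁻¹ = p / (p + 1) := by field_simp
  calc ∑ i ∈ s, (a i ^ p * b i) ^ (1 / (p + 1))
      = ∑ i ∈ s, ((N i * a i) ^ p * (N i ^ (-p) * b i)) ^ (1 / (p + 1)) := by
        refine sum_congr rfl fun i hi ↦ ?_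
        have hNp : N i ^ p ≠ 0 := (rpow_pos_of_pos (hN i hi) p).ne'
        rw [mul_rpow (hN i hi).le (ha i hi), rpow_neg (hN i hi).le]
        field_simp
    _ ≤ (∑ i ∈ s, ((N i * a i) ^ p) ^ p⁻¹) ^ (1 / (p + 1) / p⁻¹) *
          (∑ i ∈ s, (N i ^ (-p) * b i) ^ (1 : ℝ)) ^ (1 / (p + 1) / 1) :=
        Lr_rpow_le_Lp_mul_Lq_of_nonneg s (holderTriple_inv_one_one_div_add_one hp)
          (fun i hi ↦ by have := hN i hi; have := ha i hi; positivity)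
          (fun i hi ↦ by have := hN i hi; have := hb i hi; positivity)
    _ = _ := by
        rw [hr, div_one]
        simp only [rpow_one]
        congr 2
        exact sum_congr rfl fun i hi ↦
          rpow_rpow_inv (mul_nonneg (hN i hi).le (ha i hi)) hp.ne'

lemma rpow_sum_rpow_mul_rpow_le (hp : 0 < p) (hN : ∀ i ∈ s, 0 < N i) (ha : ∀ i ∈ s, 0 ≤ a i)
    (hb : ∀ i ∈ s, 0 ≤ b i) :
    (∑ i ∈ s, (a i ^ p * b i) ^ (1 / (p + 1))) ^ ((p + 1) / p) ≤
      (∑ i ∈ s, N i * a i) * (∑ i ∈ s, N i ^ (-p) * b i) ^ (1 / p) := by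
  have hA : 0 ≤ ∑ i ∈ s, N i * a i :=
    sum_nonneg fun i hi ↦ mul_nonneg (hN i hi).le (ha i hi)
  have hB : 0 ≤ ∑ i ∈ s, N i ^ (-p) * b i :=
    sum_nonneg fun i hi ↦ mul_nonneg (rpow_nonneg (hN i hi).le _) (hb i hi)
  calc (∑ i ∈ s, (a i ^ p * b i) ^ (1 / (p + 1))) ^ ((p + 1) / p)
      ≤ ((∑ i ∈ s, N i * a i) ^ (p / (p + 1)) *
          (∑ i ∈ s, N i ^ (-p) * b i) ^ (1 / (p + 1))) ^ ((p + 1) / p) :=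
        rpow_le_rpow (sum_nonneg fun i hi ↦ by have := ha i hi; have := hb i hi; positivity)
          (sum_rpow_mul_rpow_le hp hN ha hb) (by positivity)
    _ = (∑ i ∈ s, N i * a i) * (∑ i ∈ s, N i ^ (-p) * b i) ^ (1 / p) := by
        rw [mul_rpow (by positivity) (by positivity), ← rpow_mul hA, ← rpow_mul hB,
          show p / (p + 1) * ((p + 1) / p) = 1 by field_simp,
          show 1 / (p + 1) * ((p + 1) / p) = 1 / p by field_simp, rpow_one]

theorem le_sum_mul_of_sum_rpow_neg_mul_le {V : ℝ} (hp : 0 < p) (hV : 0 < V)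
    (hN : ∀ i ∈ s, 0 < N i) (ha : ∀ i ∈ s, 0 ≤ a i) (hb : ∀ i ∈ s, 0 ≤ b i)
    (hvar : ∑ i ∈ s, N i ^ (-p) * b i ≤ V) :
    V ^ (-1 / p) * (∑ i ∈ s, (a i ^ p * b i) ^ (1 / (p + 1))) ^ ((p + 1) / p) ≤
      ∑ i ∈ s, N i * a i := by
  have hA : 0 ≤ ∑ i ∈ s, N i * a i :=
    sum_nonneg fun i hi ↦ mul_nonneg (hN i hi).le (ha i hi)
  have hB : 0 ≤ ∑ i ∈ s, N i ^ (-p) * b i :=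
    sum_nonneg fun i hi ↦ mul_nonneg (rpow_nonneg (hN i hi).le _) (hb i hi)
  calc V ^ (-1 / p) * (∑ i ∈ s, (a i ^ p * b i) ^ (1 / (p + 1))) ^ ((p + 1) / p)
      ≤ V ^ (-1 / p) * ((∑ i ∈ s, N i * a i) * V ^ (1 / p)) := by
        gcongr
        exact (rpow_sum_rpow_mul_rpow_le hp hN ha hb).trans (by gcongr)
    _ = ∑ i ∈ s, N i * a i := by
        rw [mul_left_comm, ← rpow_add hV, neg_div, neg_add_cancel, rpow_zero, mul_one]

end Real

theorem stmt_7 (L : ℕ) (p V : ℝ) (hp : 0 < p) (hV : 0 < V)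
    (v c : ℕ → ℝ) (hv : ∀ ℓ ≤ L, 0 < v ℓ) (hc : ∀ ℓ ≤ L, 0 < c ℓ)
    (N : ℕ → ℝ) (hN : ∀ ℓ ≤ L, 0 < N ℓ)
    (hvar : ∑ ℓ ∈ Finset.range (L + 1), (N ℓ) ^ (-p) * v ℓ ≤ V) :
    V ^ (-1 / p) *
        (∑ ℓ ∈ Finset.range (L + 1), (c ℓ ^ p * v ℓ) ^ (1 / (p + 1))) ^ ((p + 1) / p) ≤
      ∑ ℓ ∈ Finset.range (L + 1), N ℓ * c ℓ := by
  simp only [← mem_range_succ_iff] at hv hc hN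
  exact Real.le_sum_mul_of_sum_rpow_neg_mul_le hp hV hN (fun ℓ hℓ ↦ (hc ℓ hℓ).le)
    (fun ℓ hℓ ↦ (hv ℓ hℓ).le) hvar
end
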